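/- arXiv:2210.04164 — 4 statements merged into one kernel-verified Lean document; each statement's English description precedes it below -/
import Mathlib

section
/- Let G be a finite group, (π,V) an irreducible complex representation of G with character χ, H ≤ G a subgroup, and λ a one-dimensional character of H. Then for every g ∈ G, the absolute value of (1/|H|) · Σ_{h∈H} λ(h)⁻¹ · χ(gh) is at most the multiplicity ⟨χ|_H, λ⟩_H of λ in the restriction of χ to H. -/
/-!
Let `P = |H|⁻¹ ∑ₕ λ(h)⁻¹ ρ(h)`. Then `P` is idempotent, the left side is `|tr (ρ(g) P)|` and the
right side is `tr P`. Averaging `ρ(x)ᴴ ρ(x)` over `G` gives a `G`-invariant positive definite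
form, and conjugating by its square root makes `ρ` unitary; then `P` is an orthogonal projection,
and Cauchy–Schwarz for the Frobenius inner product gives
`|tr (ρ(g) P)| = |⟪P, ρ(g) P⟫| ≤ ‖P‖ ‖ρ(g) P‖ = ‖P‖² = tr P`.
-/

open CategoryTheory Matrix

section Unitarization

open scoped ComplexOrder MatrixOrder

variable {G ι : Type*} [Fintype ι] [DecidableEq ι]

def MonoidHom.gramAverage [Monoid G] [Fintype G] (M : G →* Matrix ι ι ℂ) : Matrix ι ι ℂ :=
  ∑ x, (M x)ᴴ * M x

theorem MonoidHom.posDef_gramAverage [Monoid G] [Fintype G] (M : G →* Matrix ι ι ℂ) :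
    M.gramAverage.PosDef := by
  classical
  rw [MonoidHom.gramAverage, ← Finset.add_sum_erase _ _ (Finset.mem_univ 1), map_one,
    conjTranspose_one, one_mul]
  exact PosDef.one.add_posSemidef
    (posSemidef_sum _ fun x _ => posSemidef_conjTranspose_mul_self (M x))

theorem MonoidHom.conjTranspose_mul_gramAverage_mul [Group G] [Fintype G]
    (M : G →* Matrix ι ι ℂ) (y : G) : (M y)ᴴ * M.gramAverage * M y = M.gramAverage := by
  rw [MonoidHom.gramAverage, Finset.mul_sum, Finset.sum_mul]
  exact Fintype.sum_equiv (Equiv.mulRight y) _ _ fun x => by simp [Matrix.mul_assoc]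

theorem Matrix.PosDef.isUnit_det_sqrt {Q : Matrix ι ι ℂ} (hQ : Q.PosDef) :
    IsUnit (CFC.sqrt Q).det :=
  (isUnit_iff_isUnit_det _).1 <| (CFC.isUnit_sqrt_iff Q hQ.posSemidef.nonneg).2 hQ.isUnit

theorem Matrix.PosDef.sqrt_mul_mul_inv_sqrt_mem_unitaryGroup {Q A : Matrix ι ι ℂ}
    (hQ : Q.PosDef) (hA : Aᴴ * Q * A = Q) :
    CFC.sqrt Q * A * (CFC.sqrt Q)⁻¹ ∈ unitaryGroup ι ℂ := by
  set S := CFC.sqrt Q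
  have hSS : S * S = Q := CFC.sqrt_mul_sqrt_self Q hQ.posSemidef.nonneg
  have hS : Sᴴ = S := (CFC.sqrt_nonneg Q).posSemidef.1
  rw [mem_unitaryGroup_iff', star_eq_conjTranspose]
  calc (S * A * S⁻¹)ᴴ * (S * A * S⁻¹) = S⁻¹ * (Aᴴ * (S * S) * A) * S⁻¹ := by
        simp only [conjTranspose_mul, conjTranspose_nonsing_inv, hS, Matrix.mul_assoc]
    _ = 1 := by
        rw [hSS, hA, ← hSS, Matrix.mul_assoc, mul_nonsing_inv_cancel_right _ _ hQ.isUnit_det_sqrt,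
          nonsing_inv_mul _ hQ.isUnit_det_sqrt]

theorem MonoidHom.exists_unitary_trace_eq [Group G] [Fintype G] (M : G →* Matrix ι ι ℂ) :
    ∃ U : G →* Matrix ι ι ℂ, (∀ x, U x ∈ unitaryGroup ι ℂ) ∧ ∀ x, (U x).trace = (M x).trace := by
  set S := CFC.sqrt M.gramAverage
  have hS : IsUnit S.det := M.posDef_gramAverage.isUnit_det_sqrt
  refine ⟨{ toFun x := S * M x * S⁻¹
            map_one' := by simp [mul_nonsing_inv _ hS]
            map_mul' x y := by simp [Matrix.mul_assoc, nonsing_inv_mul_cancel_left _ _ hS] },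
    fun x => M.posDef_gramAverage.sqrt_mul_mul_inv_sqrt_mem_unitaryGroup
      (M.conjTranspose_mul_gramAverage_mul x), fun x => ?_⟩
  simp [trace_mul_cycle, nonsing_inv_mul _ hS]

end Unitarization

theorem MonoidHom.starRingEnd_coe_apply {K : Type*} [Group K] [Finite K] (lam : K →* ℂˣ)
    (k : K) : starRingEnd ℂ (lam k : ℂ) = ((lam k)⁻¹ : ℂˣ) := by
  have := Fintype.ofFinite K
  have hpow : (lam k : ℂ) ^ Fintype.card K = 1 := by
    rw [← Units.val_pow_eq_pow_val, ← map_pow, pow_card_eq_one, map_one, Units.val_one]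
  rw [← Complex.inv_eq_conj (Complex.norm_eq_one_of_pow_eq_one hpow Fintype.card_ne_zero),
    Units.val_inv_eq_inv_val]

theorem MonoidHom.star_apply_of_mem_unitary {K A : Type*} [Group K] [Monoid A] [StarMul A]
    {U : K →* A} {k : K} (hU : U k ∈ unitary A) : star (U k) = U k⁻¹ := by
  rw [← mul_one (star (U k)), ← map_one U, ← mul_inv_cancel k, map_mul, ← mul_assoc,
    Unitary.star_mul_self_of_mem hU, one_mul]

section TwistedAverage

variable {K A : Type*} [Group K] [Fintype K] [Ring A] [Algebra ℂ A]

noncomputable def twistedAverage (U : K →* A) (lam : K →* ℂˣ) : A :=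
  (Fintype.card K : ℂ)⁻¹ • ∑ k, (((lam k)⁻¹ : ℂˣ) : ℂ) • U k

theorem isIdempotentElem_twistedAverage (U : K →* A) (lam : K →* ℂˣ) :
    IsIdempotentElem (twistedAverage U lam) := by
  have hmul (h : K) : ((((lam h)⁻¹ : ℂˣ) : ℂ) • U h) * ∑ k, (((lam k)⁻¹ : ℂˣ) : ℂ) • U k =
      ∑ k, (((lam k)⁻¹ : ℂˣ) : ℂ) • U k := by
    rw [Finset.mul_sum]
    refine Fintype.sum_equiv (Equiv.mulLeft h) _ _ fun k => ?_
    simp [smul_smul, mul_comm]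
  unfold IsIdempotentElem twistedAverage
  rw [smul_mul_smul_comm, Finset.sum_mul]
  simp only [hmul, Finset.sum_const, Finset.card_univ, ← Nat.cast_smul_eq_nsmul ℂ, smul_smul]
  congr 1
  field_simp

theorem isSelfAdjoint_twistedAverage [StarRing A] [StarModule ℂ A] {U : K →* A}
    (hU : ∀ k, U k ∈ unitary A) (lam : K →* ℂˣ) : IsSelfAdjoint (twistedAverage U lam) := by
  rw [IsSelfAdjoint, twistedAverage, star_smul, star_sum]
  simp only [star_smul, MonoidHom.star_apply_of_mem_unitary (hU _), star_inv₀,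
    Complex.star_def, map_natCast]
  congr 1
  refine Fintype.sum_equiv (Equiv.inv K) _ _ fun k => ?_
  simp [MonoidHom.starRingEnd_coe_apply]

end TwistedAverage

section Frobenius

variable {ι : Type*} [Fintype ι]

theorem Matrix.trace_conjTranspose_mul_eq_inner (A B : Matrix ι ι ℂ) :
    (Aᴴ * B).trace = inner ℂ (WithLp.toLp 2 fun j => WithLp.toLp 2 fun i => A i j)
      (WithLp.toLp 2 fun j => WithLp.toLp 2 fun i => B i j) := by
  simp [trace, mul_apply, PiLp.inner_apply, mul_comm]

theorem Matrix.norm_trace_conjTranspose_mul_sq_le (A B : Matrix ι ι ℂ) :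
    ‖(Aᴴ * B).trace‖ ^ 2 ≤ (Aᴴ * A).trace.re * (Bᴴ * B).trace.re := by
  simp only [trace_conjTranspose_mul_eq_inner, ← RCLike.re_eq_complex_re, inner_self_eq_norm_sq,
    ← mul_pow]
  gcongr
  exact norm_inner_le_norm _ _

open scoped ComplexOrder in
theorem Matrix.norm_trace_mul_le_re_trace [DecidableEq ι] {A P : Matrix ι ι ℂ}
    (hA : A ∈ unitaryGroup ι ℂ) (hP : IsStarProjection P) : ‖(A * P).trace‖ ≤ P.trace.re := by
  have hPP : Pᴴ * P = P := by
    rw [← star_eq_conjTranspose, hP.isSelfAdjoint.star_eq, hP.isIdempotentElem.eq]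
  have hAP : (A * P)ᴴ * (A * P) = P := by
    rw [conjTranspose_mul, Matrix.mul_assoc, ← Matrix.mul_assoc Aᴴ, ← star_eq_conjTranspose A,
      (mem_unitaryGroup_iff').1 hA, Matrix.one_mul, hPP]
  have hPAP : (Pᴴ * (A * P)).trace = (A * P).trace := by
    rw [← star_eq_conjTranspose, hP.isSelfAdjoint.star_eq, trace_mul_comm, Matrix.mul_assoc,
      hP.isIdempotentElem.eq]
  have hnonneg : 0 ≤ P.trace.re := by
    rw [← hPP]
    exact (Complex.nonneg_iff.1 (posSemidef_conjTranspose_mul_self P).trace_nonneg).1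
  have hCS := norm_trace_conjTranspose_mul_sq_le P (A * P)
  rw [hPAP, hPP, hAP, ← sq] at hCS
  exact (pow_le_pow_iff_left₀ (norm_nonneg _) hnonneg two_ne_zero).1 hCS

end Frobenius

theorem stmt0_general {G : Type} [Group G] [Fintype G] (V : FDRep ℂ G)
    (H : Subgroup G) [Fintype H] (lam : H →* ℂˣ) (g : G) :
    ‖(Fintype.card H : ℂ)⁻¹ *
        ∑ h : H, (((lam h)⁻¹ : ℂˣ) : ℂ) * V.character (g * h)‖ ≤
      ((Fintype.card H : ℂ)⁻¹ *
        ∑ h : H, V.character h * (starRingEnd ℂ) ((lam h : ℂˣ) : ℂ)).re := by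
  let b := Module.finBasis ℂ V
  obtain ⟨U, hU, htrace⟩ :=
    ((LinearMap.toMatrixAlgEquiv b).toMonoidHom.comp V.ρ).exists_unitary_trace_eq
  have hχ (x : G) : V.character x = (U x).trace :=
    (LinearMap.trace_eq_matrix_trace ℂ b (V.ρ x)).trans (htrace x).symm
  set P := twistedAverage (U.comp H.subtype) lam
  have hP : IsStarProjection P :=
    ⟨isIdempotentElem_twistedAverage _ lam, isSelfAdjoint_twistedAverage (fun h : H => hU h) lam⟩
  have hgP : (U g * P).trace =
      (Fintype.card H : ℂ)⁻¹ * ∑ h : H, (((lam h)⁻¹ : ℂˣ) : ℂ) * V.character (g * h) := by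
    simp [P, twistedAverage, hχ, Finset.mul_sum, trace_sum]
  have hPtr : P.trace =
      (Fintype.card H : ℂ)⁻¹ * ∑ h : H, V.character h * (starRingEnd ℂ) ((lam h : ℂˣ) : ℂ) := by
    simp [P, twistedAverage, hχ, trace_sum, MonoidHom.starRingEnd_coe_apply, mul_comm]
  rw [← hgP, ← hPtr]
  exact norm_trace_mul_le_re_trace (hU g) hP

/-- Let `G` be a finite group, `V` an irreducible complex representation of `G` with
character `χ`, `H ≤ G` a subgroup, and `lam` a one-dimensional character of `H`. Then for
every `g ∈ G`, `|(1/|H|) Σ_{h∈H} lam(h)⁻¹ χ(g h)|` is at most the multiplicity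
`⟨χ|_H, lam⟩_H = (1/|H|) Σ_{h∈H} χ(h) · conj(lam h)` of `lam` in `χ|_H`. -/
theorem stmt0 {G : Type} [Group G] [Fintype G] (V : FDRep ℂ G) [Simple V]
    (H : Subgroup G) [Fintype H] (lam : H →* ℂˣ) (g : G) :
    ‖(Fintype.card H : ℂ)⁻¹ *
        ∑ h : H, (((lam h)⁻¹ : ℂˣ) : ℂ) * V.character (g * h)‖ ≤
      ((Fintype.card H : ℂ)⁻¹ *
        ∑ h : H, V.character h * (starRingEnd ℂ) ((lam h : ℂˣ) : ℂ)).re :=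
  stmt0_general V H lam g
end

section
/- Let H(x) = -x·log₂(x) - (1-x)·log₂(1-x) be the binary entropy function. Let 0 < δ ≤ 1/2, b ∈ [δ, 1/2], a ∈ [δ, b], and let d > 1/δ⁴ be such that bd, ad, and d are integers. Then binomial(d, (b-a)d) ≤ binomial(d, bd)^{1-δ²}. -/
/-!
Let `k = bn - an` and `t = ⌊an / 2⌋`. For `j < k + t ≤ (1 - δ) d / 2` the ratio
`C(d, j + 1) / C(d, j) = (d - j) / (j + 1)` is at least `r = (1 + δ) / (1 - δ)`, so
`C(d, k) · r ^ t ≤ C(d, k + t) ≤ C(d, bd)`. Since `log r ≥ 2δ` and `t ≳ δd / 2`, the factor `r ^ t`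
exceeds `2 ^ (δ² d) ≥ C(d, bd) ^ δ²` as soon as `δd (1 - log 2) ≥ 1`, which `d > δ⁻⁴` guarantees.
-/

open Real

lemma two_mul_le_log_one_add_div_one_sub {x : ℝ} (hx0 : 0 ≤ x) (hx1 : x < 1) :
    2 * x ≤ log ((1 + x) / (1 - x)) := by
  have hsum := hasSum_log_sub_log_of_abs_lt_one (abs_lt.2 ⟨by linarith, hx1⟩)
  rw [log_div (by linarith) (by linarith)]
  simpa using le_hasSum hsum 0 fun k _ => by positivity

lemma two_rpow_le_pow_one_add_div_one_sub {δ D : ℝ} {t : ℕ} (hδ0 : 0 ≤ δ) (hδ1 : δ < 1)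
    (hD : 4 ≤ δ * D) (ht : δ * D - 1 ≤ 2 * t) :
    (2 : ℝ) ^ (δ ^ 2 * D) ≤ ((1 + δ) / (1 - δ)) ^ t := by
  have hr : 0 < (1 + δ) / (1 - δ) := div_pos (by linarith) (by linarith)
  rw [rpow_def_of_pos two_pos, ← exp_log (pow_pos hr t), log_pow, exp_le_exp]
  have hlog := two_mul_le_log_one_add_div_one_sub hδ0 hδ1
  have hlog2 := log_two_lt_d9
  have hD' : 1 ≤ δ * D * (1 - log 2) := by nlinarith
  calc log 2 * (δ ^ 2 * D) ≤ δ * (δ * D - 1) := by nlinarith [mul_le_mul_of_nonneg_left hD' hδ0]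
    _ ≤ t * (2 * δ) := by nlinarith
    _ ≤ t * log ((1 + δ) / (1 - δ)) := by gcongr

lemma eight_lt_mul_of_one_div_pow_four_lt {δ D : ℝ} (hδ0 : 0 < δ) (hδ : δ ≤ 1 / 2)
    (hD : 1 / δ ^ 4 < D) : 8 < δ * D := by
  have hD0 : 0 ≤ D := le_trans (by positivity) hD.le
  rw [div_lt_iff₀ (by positivity)] at hD
  nlinarith [mul_le_mul_of_nonneg_right (pow_le_pow_left₀ hδ0.le hδ 3) (mul_nonneg hδ0.le hD0)]

lemma Nat.choose_mul_le_choose_succ {d j : ℕ} {r : ℝ} (h : r * (j + 1) ≤ d - j) :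
    (d.choose j : ℝ) * r ≤ d.choose (j + 1) := by
  rcases lt_or_ge d j with hdj | hjd
  · simp [Nat.choose_eq_zero_of_lt hdj]
  have hpascal : (d.choose (j + 1) : ℝ) * (j + 1) = d.choose j * (d - j) := by
    rw [← Nat.cast_sub hjd]
    exact_mod_cast Nat.choose_succ_right_eq d j
  refine le_of_mul_le_mul_right ?_ (by positivity : (0 : ℝ) < j + 1)
  rw [hpascal, mul_assoc]
  gcongr

lemma Nat.choose_mul_pow_le_choose_add {d k t : ℕ} {r : ℝ} (hr : 0 ≤ r)
    (h : (r + 1) * ((k + t : ℕ) : ℝ) ≤ d + 1) : (d.choose k : ℝ) * r ^ t ≤ d.choose (k + t) := by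
  induction t with
  | zero => simp
  | succ t ih =>
    push_cast at h
    calc (d.choose k : ℝ) * r ^ (t + 1) = d.choose k * r ^ t * r := by ring
      _ ≤ d.choose (k + t) * r := by gcongr; exact ih (by push_cast; nlinarith)
      _ ≤ d.choose (k + t + 1) := Nat.choose_mul_le_choose_succ (by push_cast; linarith)

lemma Nat.choose_le_choose_of_le_of_two_mul_le {d k m : ℕ} (hkm : k ≤ m) (hm : 2 * m ≤ d + 1) :
    d.choose k ≤ d.choose m := by
  have hm' : k + (m - k) = m := by omega
  have h := Nat.choose_mul_pow_le_choose_add (d := d) (k := k) (t := m - k) zero_le_one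
    (by rw [hm']; norm_num; exact_mod_cast hm)
  rw [hm'] at h
  exact_mod_cast (by simpa using h)

lemma Nat.choose_mul_pow_le_choose_of_two_mul_le {d k t m : ℕ} {δ : ℝ} (hδ0 : 0 ≤ δ)
    (hδ1 : δ < 1) (hkt : 2 * ((k + t : ℕ) : ℝ) ≤ (1 - δ) * d) (hm : k + t ≤ m)
    (hmd : 2 * m ≤ d) : (d.choose k : ℝ) * ((1 + δ) / (1 - δ)) ^ t ≤ d.choose m := by
  have hr0 : 0 ≤ (1 + δ) / (1 - δ) := div_nonneg (by linarith) (by linarith)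
  have hr : (1 + δ) / (1 - δ) + 1 = 2 / (1 - δ) := by
    rw [div_add_one (by linarith)]
    ring
  calc (d.choose k : ℝ) * ((1 + δ) / (1 - δ)) ^ t ≤ d.choose (k + t) := by
        refine Nat.choose_mul_pow_le_choose_add hr0 ?_
        rw [hr, div_mul_eq_mul_div, div_le_iff₀ (by linarith)]
        nlinarith
    _ ≤ d.choose m := by exact_mod_cast Nat.choose_le_choose_of_le_of_two_mul_le hm (by omega)

lemma le_rpow_one_sub_of_mul_rpow_le {x y e : ℝ} (hy : 0 < y) (h : x * y ^ e ≤ y) :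
    x ≤ y ^ (1 - e) := by
  rwa [rpow_sub hy, rpow_one, le_div_iff₀ (rpow_pos_of_pos hy e)]

theorem stmt9_general (δ a b : ℝ) (d bn an : ℕ)
    (hδ0 : 0 < δ) (hδhalf : δ ≤ 1 / 2)
    (hbu : b ≤ 1 / 2)
    (hal : δ ≤ a) (hau : a ≤ b)
    (hd : 1 / δ ^ 4 < (d : ℝ))
    (hbn : (bn : ℝ) = b * d) (han : (an : ℝ) = a * d) :
    (d.choose (bn - an) : ℝ) ≤ (d.choose bn : ℝ) ^ ((1 : ℝ) - δ ^ 2) := by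
  have hδd := eight_lt_mul_of_one_div_pow_four_lt hδ0 hδhalf hd
  have hanbn : an ≤ bn := by exact_mod_cast (show (an : ℝ) ≤ bn by rw [hbn, han]; nlinarith)
  have h2bn : 2 * bn ≤ d := by
    exact_mod_cast (show ((2 * bn : ℕ) : ℝ) ≤ d by push_cast [hbn]; nlinarith)
  have hkt : 2 * ((bn - an + an / 2 : ℕ) : ℝ) ≤ (1 - δ) * d := by
    have := (Nat.cast_le (α := ℝ)).2 (by omega : 2 * (bn - an + an / 2) + an ≤ 2 * bn)
    push_cast at this ⊢
    nlinarith
  have ht : δ * d - 1 ≤ 2 * (an / 2 : ℕ) := by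
    have := (Nat.cast_le (α := ℝ)).2 (by omega : an ≤ 2 * (an / 2) + 1)
    push_cast at this
    nlinarith
  have hpow : (d.choose bn : ℝ) ^ (δ ^ 2) ≤ ((1 + δ) / (1 - δ)) ^ (an / 2) := calc
    (d.choose bn : ℝ) ^ (δ ^ 2) ≤ ((2 : ℝ) ^ d) ^ (δ ^ 2) := by
      gcongr
      exact_mod_cast Nat.choose_le_two_pow d bn
    _ = 2 ^ (δ ^ 2 * d) := by rw [← rpow_natCast, ← rpow_mul zero_le_two, mul_comm]
    _ ≤ ((1 + δ) / (1 - δ)) ^ (an / 2) :=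
      two_rpow_le_pow_one_add_div_one_sub hδ0.le (by linarith) (by linarith) ht
  refine le_rpow_one_sub_of_mul_rpow_le (by exact_mod_cast Nat.choose_pos (by omega)) ?_
  calc (d.choose (bn - an) : ℝ) * (d.choose bn : ℝ) ^ (δ ^ 2)
      ≤ d.choose (bn - an) * ((1 + δ) / (1 - δ)) ^ (an / 2) := by gcongr
    _ ≤ d.choose bn :=
      Nat.choose_mul_pow_le_choose_of_two_mul_le hδ0.le (by linarith) hkt (by omega) h2bn

/-- Let `0 < δ ≤ 1/2`, `b ∈ [δ, 1/2]`, `a ∈ [δ, b]`, and `d > 1/δ⁴` such that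
`b·d`, `a·d` and `d` are integers (we encode `b·d = bn`, `a·d = an` with `bn an : ℕ`).
Then `C(d, (b-a)d) ≤ C(d, bd)^(1-δ²)`. -/
theorem stmt9 (δ a b : ℝ) (d bn an : ℕ)
    (hδ0 : 0 < δ) (hδhalf : δ ≤ 1 / 2)
    (hbl : δ ≤ b) (hbu : b ≤ 1 / 2)
    (hal : δ ≤ a) (hau : a ≤ b)
    (hd : 1 / δ ^ 4 < (d : ℝ))
    (hbn : (bn : ℝ) = b * d) (han : (an : ℝ) = a * d) :
    (d.choose (bn - an) : ℝ) ≤ (d.choose bn : ℝ) ^ ((1 : ℝ) - δ ^ 2) :=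
  stmt9_general δ a b d bn an hδ0 hδhalf hbu hal hau hd hbn han
end

section
/- For 0 < b ≤ 1/2 and 0 < δ ≤ b, the binary entropy function H(x) = -x·log₂(x) - (1-x)·log₂(1-x) satisfies H(b) - H(b-δ) ≥ 2δ². -/
/-!
In nats, the slope `log (1 - t) - log t` of the binary entropy is at least `2 - 4t` on `(0, 1/2]`
(the first term of the series `log (1 + u) - log (1 - u) = 2 ∑ u ^ (2k+1) / (2k+1)` at
`u = 1 - 2t`). Hence `t ↦ H(t) + 2 (y - t)²` is nondecreasing on `[0, y]` for `y ≤ 1/2`, giving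
`H(y) - H(x) ≥ 2 (y - x)²` in nats; passing to bits divides by `log 2 < 1`.
-/

open Real Set

noncomputable def binEntropy2 (x : ℝ) : ℝ :=
  -x * Real.logb 2 x - (1 - x) * Real.logb 2 (1 - x)

lemma two_mul_le_log_one_add_sub_log_one_sub {u : ℝ} (hu₀ : 0 ≤ u) (hu₁ : u < 1) :
    2 * u ≤ log (1 + u) - log (1 - u) := by
  have hsum := hasSum_log_sub_log_of_abs_lt_one (abs_lt.2 ⟨by linarith, hu₁⟩)
  simpa using le_hasSum hsum 0 fun k _ => by positivity

lemma two_sub_four_mul_le_log_one_sub_sub_log {t : ℝ} (ht₀ : 0 < t) (ht : t ≤ 1 / 2) :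
    2 - 4 * t ≤ log (1 - t) - log t := by
  have key := two_mul_le_log_one_add_sub_log_one_sub (u := 1 - 2 * t) (by linarith) (by linarith)
  rw [show 1 + (1 - 2 * t) = 2 * (1 - t) by ring, show 1 - (1 - 2 * t) = 2 * t by ring,
    log_mul two_ne_zero (by linarith), log_mul two_ne_zero ht₀.ne'] at key
  linarith

lemma two_mul_sq_le_binEntropy_sub_binEntropy {x y : ℝ} (hx : 0 ≤ x) (hxy : x ≤ y)
    (hy : y ≤ 1 / 2) : 2 * (y - x) ^ 2 ≤ binEntropy y - binEntropy x := by
  let g : ℝ → ℝ := fun t => binEntropy t + 2 * (y - t) ^ 2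
  have hg : MonotoneOn g (Icc 0 y) := by
    refine monotoneOn_of_hasDerivWithinAt_nonneg (convex_Icc 0 y)
      (binEntropy_continuous.add (by fun_prop)).continuousOn
      (f' := fun t => log (1 - t) - log t - 4 * (y - t)) (fun t ht => ?_) (fun t ht => ?_)
    · rw [interior_Icc] at ht
      have hsq : HasDerivAt (fun t => 2 * (y - t) ^ 2) (-(4 * (y - t))) t :=
        ((((hasDerivAt_id' t).const_sub y).fun_pow 2).const_mul 2).congr_deriv (by norm_num; ring)
      exact ((hasDerivAt_binEntropy ht.1.ne' (by linarith [ht.2])).add hsq).hasDerivWithinAt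
    · rw [interior_Icc] at ht
      linarith [two_sub_four_mul_le_log_one_sub_sub_log ht.1 (by linarith [ht.2])]
  have hgxy := hg ⟨hx, hxy⟩ ⟨hx.trans hxy, le_rfl⟩ hxy
  simp only [g, sub_self] at hgxy
  linarith

lemma binEntropy2_eq_binEntropy_div_log_two (x : ℝ) : binEntropy2 x = binEntropy x / log 2 := by
  simp only [binEntropy2, binEntropy, logb, log_inv]
  ring

/-- For `0 < δ ≤ b ≤ 1/2`, the binary entropy satisfies `H(b) - H(b-δ) ≥ 2δ²`. -/
theorem stmt11 (b δ : ℝ) (hb : b ≤ 1 / 2) (hδ0 : 0 < δ) (hδb : δ ≤ b) :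
    2 * δ ^ 2 ≤ binEntropy2 b - binEntropy2 (b - δ) := by
  have hnats := two_mul_sq_le_binEntropy_sub_binEntropy (x := b - δ) (by linarith) (by linarith) hb
  rw [sub_sub_cancel] at hnats
  rw [binEntropy2_eq_binEntropy_div_log_two, binEntropy2_eq_binEntropy_div_log_two, ← sub_div,
    le_div_iff₀ (log_pos one_lt_two)]
  calc 2 * δ ^ 2 * log 2 ≤ 2 * δ ^ 2 :=
        mul_le_of_le_one_right (by positivity) (by linarith [log_two_lt_d9])
    _ ≤ binEntropy b - binEntropy (b - δ) := hnats
end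

section
/- Let λ be a partition of m with Young diagram whose columns have lengths j_1 ≥ j_2 ≥ … ≥ j_t, and let d ≥ m. Then the product Π_{(a,b)∈λ} (d + b - a) over the cells of λ (a the row index, b the column index) satisfies Π_{(a,b)∈λ}(d+b-a) ≥ d·(d-1)·⋯·(d-m+1). -/
/-!
Peel off the first row, of length `x ≥ 1`. Its cells contribute `d (d+1) ⋯ (d+x-1)`, which
dominates the first `x` factors `d (d-1) ⋯ (d-x+1)` of the falling factorial. Every other cell
has its content `b - a` lowered by one, so the remaining rows give the same product at `d - 1`;
by induction it dominates `(d-1) (d-2) ⋯`, and hence the remaining factors `(d-x) (d-x-1) ⋯`.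
-/

open Finset

variable {R : Type*} [CommRing R]

/-- `∏ (d + c(u))` over the cells `u` of the Young diagram with row lengths `L`, where
`c(a, b) = b - a` is the content (rows and columns 0-indexed). -/
def contentProduct (d : R) (L : List ℕ) : R :=
  ∏ a ∈ range L.length, ∏ b ∈ range (L.getD a 0), (d + b - a)

lemma contentProduct_nil (d : R) : contentProduct d [] = 1 := by
  simp [contentProduct]

lemma contentProduct_cons (d : R) (x : ℕ) (L : List ℕ) :
    contentProduct d (x :: L) = (∏ b ∈ range x, (d + b)) * contentProduct (d - 1) L := by
  rw [contentProduct, List.length_cons, prod_range_succ', mul_comm, contentProduct]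
  simp only [List.getD_cons_zero, List.getD_cons_succ, Nat.cast_zero, sub_zero, Nat.cast_succ]
  congr 1
  refine prod_congr rfl fun a _ => prod_congr rfl fun b _ => ?_
  ring

section Ordered

variable [LinearOrder R] [IsStrictOrderedRing R]

lemma prod_range_sub_nonneg {n : ℕ} {c : R} (hn : (n : R) ≤ c) :
    0 ≤ ∏ j ∈ range n, (c - j) :=
  prod_nonneg fun j hj => by
    have : (j : R) < n := by exact_mod_cast mem_range.mp hj
    linarith

lemma prod_range_sub_le_prod_range_sub {n : ℕ} {c c' : R} (hn : (n : R) ≤ c) (hc : c ≤ c') :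
    ∏ j ∈ range n, (c - j) ≤ ∏ j ∈ range n, (c' - j) :=
  prod_le_prod (fun j hj => by
      have : (j : R) < n := by exact_mod_cast mem_range.mp hj
      linarith)
    fun j _ => by linarith

lemma prod_range_sub_le_prod_range_add {n : ℕ} {c : R} (hn : (n : R) ≤ c) :
    ∏ j ∈ range n, (c - j) ≤ ∏ j ∈ range n, (c + j) :=
  prod_le_prod (fun j hj => by
      have : (j : R) < n := by exact_mod_cast mem_range.mp hj
      linarith)
    fun j _ => by have : (0 : R) ≤ j := j.cast_nonneg; linarith

theorem prod_range_sub_le_contentProduct (L : List ℕ) (hpos : ∀ x ∈ L, 0 < x) (d : R)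
    (hd : (L.sum : R) ≤ d) :
    ∏ j ∈ range L.sum, (d - j) ≤ contentProduct d L := by
  induction L generalizing d with
  | nil => simp [contentProduct_nil]
  | cons x L ih =>
    have hx : (1 : R) ≤ x := by exact_mod_cast hpos x List.mem_cons_self
    have hL : (L.sum : R) ≤ d - x := by rw [List.sum_cons, Nat.cast_add] at hd; linarith
    have hx_le : (x : R) ≤ d := by have : (0 : R) ≤ L.sum := L.sum.cast_nonneg; linarith
    have first_row : ∏ j ∈ range x, (d - j) ≤ ∏ b ∈ range x, (d + b) :=
      prod_range_sub_le_prod_range_add hx_le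
    have rest : ∏ j ∈ range L.sum, (d - x - j) ≤ contentProduct (d - 1) L :=
      (prod_range_sub_le_prod_range_sub hL (by linarith)).trans
        (ih (fun y hy => hpos y (List.mem_cons_of_mem x hy)) (d - 1) (by linarith))
    rw [contentProduct_cons, List.sum_cons, prod_range_add]
    simp only [Nat.cast_add, ← sub_sub]
    exact mul_le_mul first_row rest (prod_range_sub_nonneg hL)
      ((prod_range_sub_nonneg hx_le).trans first_row)

end Ordered

theorem stmt13_general (m d : ℕ) (hd : m ≤ d) (L : List ℕ)
    (hpos : ∀ x ∈ L, 0 < x) (hsum : L.sum = m) :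
    ∏ j ∈ Finset.range m, ((d : ℤ) - j) ≤
      ∏ a ∈ Finset.range L.length, ∏ b ∈ Finset.range (L.getD a 0), ((d : ℤ) + b - a) := by
  subst hsum
  exact prod_range_sub_le_contentProduct L hpos (d : ℤ) (by exact_mod_cast hd)

/-- Let `λ` be a partition of `m` (encoded as a decreasingly sorted list `L` of positive
integers summing to `m`), and let `d ≥ m`. Then the product over the cells `(a,b)` of the
Young diagram of `λ` (with `0`-indexed row `a` and column `b`, so the cell in row `a`,
column `b` contributes `d + b - a`) satisfies
`Π_{(a,b)∈λ} (d + b - a) ≥ d·(d-1)⋯(d-m+1)`. -/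
theorem stmt13 (m d : ℕ) (hd : m ≤ d) (L : List ℕ)
    (hsort : L.Pairwise (· ≥ ·)) (hpos : ∀ x ∈ L, 0 < x) (hsum : L.sum = m) :
    ∏ j ∈ Finset.range m, ((d : ℤ) - j) ≤
      ∏ a ∈ Finset.range L.length, ∏ b ∈ Finset.range (L.getD a 0), ((d : ℤ) + b - a) :=
  stmt13_general m d hd L hpos hsum
end
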